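/- arXiv:2109.06083 — 2 statements merged into one kernel-verified Lean document; each statement's English description precedes it below -/
import Mathlib

section
/- Let $N\ge 2$ and let $A\in\mathbb{R}^{N\times N}$ be the periodic forward-difference matrix with entries $(Ab)^\alpha = N(b^{\alpha+1}-b^{\alpha})$ (indices mod $N$). Then for any vector $h\in\mathbb{R}^N$ with all entries positive, and $G^{-1}(h)$ the diagonal matrix with entries $g^{\alpha\alpha}(h)$ equal to the harmonic mean $\left(\frac{1}{h^{\alpha+1}-h^{\alpha}}\int_{h^\alpha}^{h^{\alpha+1}} \frac{dh}{M(h)}\right)^{-1}$ (interpreted as $M(h^\alpha)$ when $h^{\alpha+1}=h^\alpha$), and $s'$ an antiderivative of $1/M$, the identity $G^{-1}(h)\,A\,s'(h) = A h$ holds, where $s'(h)$ denotes the componentwise application of $s'$. -/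
open MeasureTheory intervalIntegral

/-- Grün–Rumpf identity `G⁻¹(h) A s'(h) = A h`: with the periodic forward-difference
operator `(Ab)^α = N (b^{α+1} - b^α)` and the diagonal numerical mobility `g α` given by
the harmonic mean of `M` over the interval with endpoints `h α, h (α+1)` (interpreted as
`M (h α)` when the endpoints coincide), where `s'` is an antiderivative of `1/M`. -/
theorem gruen_rumpf_identity (N : ℕ) [NeZero N] (hN : 2 ≤ N) (M s' : ℝ → ℝ)
    (hMpos : ∀ x > (0:ℝ), 0 < M x)
    (hMcont : ContinuousOn M (Set.Ioi 0))
    (hs' : ∀ x > (0:ℝ), HasDerivAt s' (1 / M x) x)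
    (h : Fin N → ℝ) (hpos : ∀ i, 0 < h i)
    (g : Fin N → ℝ)
    (hg : ∀ α : Fin N, g α =
      if h (α + 1) = h α then M (h α)
      else (((h (α + 1) - h α)⁻¹) * ∫ x in (h α)..(h (α + 1)), (M x)⁻¹)⁻¹) :
    ∀ α : Fin N,
      g α * ((N : ℝ) * (s' (h (α + 1)) - s' (h α))) = (N : ℝ) * (h (α + 1) - h α) := by
  intro α
  set a := h α with ha
  set b := h (α + 1) with hb
  have hapos : 0 < a := hpos α
  have hbpos : 0 < b := hpos (α + 1)
  have hsub : Set.uIcc a b ⊆ Set.Ioi (0:ℝ) := by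
    intro x hx
    have := hx.1
    rcases le_total a b with hab | hab
    · have : min a b ≤ x := hx.1
      simp only [min_def] at this
      exact lt_of_lt_of_le (by positivity) hx.1
    · exact lt_of_lt_of_le (by positivity) hx.1
  have hcontinv : ContinuousOn (fun x => (M x)⁻¹) (Set.uIcc a b) := by
    apply ContinuousOn.inv₀ (hMcont.mono hsub)
    intro x hx
    exact (hMpos x (hsub hx)).ne'
  have hint : IntervalIntegrable (fun x => (M x)⁻¹) volume a b :=
    hcontinv.intervalIntegrable
  have hftc : ∫ x in a..b, (M x)⁻¹ = s' b - s' a := by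
    apply intervalIntegral.integral_eq_sub_of_hasDerivAt
    · intro x hx
      have := hs' x (hsub hx)
      simpa [one_div] using this
    · exact hint
  by_cases hba : b = a
  · simp [hba]
  · rw [hg α, if_neg hba, ← hb, ← ha, ← hftc]
    have hne : (∫ x in a..b, (M x)⁻¹) ≠ 0 := by
      rcases lt_or_gt_of_ne (fun e => hba e.symm) with hlt | hlt
      · have : 0 < ∫ x in a..b, (M x)⁻¹ := by
          apply intervalIntegral.intervalIntegral_pos_of_pos_on hint
          · intro x hx
            have hx' : x ∈ Set.Ioi (0:ℝ) := hsub (Set.Icc_subset_uIcc (Set.Ioo_subset_Icc_self hx))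
            exact inv_pos.mpr (hMpos x hx')
          · exact hlt
        exact this.ne'
      · have : 0 < ∫ x in b..a, (M x)⁻¹ := by
          apply intervalIntegral.intervalIntegral_pos_of_pos_on hint.symm
          · intro x hx
            have hx' : x ∈ Set.Ioi (0:ℝ) := hsub (Set.Icc_subset_uIcc' (Set.Ioo_subset_Icc_self hx))
            exact inv_pos.mpr (hMpos x hx')
          · exact hlt
        have := this.ne'
        rw [intervalIntegral.integral_symm] at this
        simpa using this
    have hba' : b - a ≠ 0 := sub_ne_zero.mpr hba
    rw [mul_inv, inv_inv, mul_assoc, mul_comm (N:ℝ), ← mul_assoc ((∫ x in a..b, (M x)⁻¹)⁻¹),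
      inv_mul_cancel₀ hne, one_mul, mul_comm]
end

section
/- Let $N\ge 2$, let $C$ be the periodic central-difference matrix $(Cb)^j = N(b^{j+1}-b^{j-1})$, let $M:(0,\infty)\to\mathbb{R}$ be $C^1$, and for $h\in(0,\infty)^N$ let $G^{-1}(h)$ be the diagonal matrix with entries $M(h^\alpha)$. Then the divergence of the diffusion matrix vanishes: $\sum_{j=1}^N \partial_{h^j}\big(C^T G^{-1}(h)\, C\big)^i_{\ j} = 0$ for every $i$ and every $h\in(0,\infty)^N$. -/
open Matrix

/-- Vanishing Itô correction for the central-difference discretization: the divergence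
`∑_j ∂_{h^j} (Cᵀ G⁻¹(h) C)^i_j` vanishes identically on the positive orthant. -/
theorem central_difference_divergence_free (N : ℕ) [NeZero N] (hN : 2 ≤ N) (M : ℝ → ℝ)
    (hM : ContDiffOn ℝ 1 M (Set.Ioi 0))
    (C : Matrix (Fin N) (Fin N) ℝ)
    (hC : ∀ b : Fin N → ℝ, ∀ j : Fin N, C.mulVec b j = (N : ℝ) * (b (j + 1) - b (j - 1))) :
    ∀ h : Fin N → ℝ, (∀ k, 0 < h k) → ∀ i : Fin N,
      ∑ j : Fin N,
        deriv (fun y : ℝ =>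
          (C.transpose * Matrix.diagonal (fun α => M (Function.update h j y α)) * C) i j)
          (h j) = 0 := by
  have hone : (1 : Fin N) ≠ 0 := by
    intro hcon
    have := Fin.one_eq_zero_iff.mp hcon
    omega
  have hCdiag : ∀ j : Fin N, C j j = 0 := by
    intro j
    have h1 : j + 1 ≠ j := by
      intro hcon
      exact hone (by simpa using congrArg (fun x => x - j) hcon)
    have h2 : j - 1 ≠ j := by
      intro hcon
      apply hone
      have := congrArg (fun x => x + 1 - j) hcon
      simpa [sub_add_cancel] using this
    have := hC (Pi.single j 1) j
    have hl : C.mulVec (Pi.single j 1) j = C j j := by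
      simp [Matrix.mulVec, dotProduct, Pi.single_apply]
    rw [hl] at this
    rw [this, Pi.single_eq_of_ne h1, Pi.single_eq_of_ne h2]
    ring
  intro h hpos i
  apply Finset.sum_eq_zero
  intro j _
  have key : (fun y : ℝ =>
      (C.transpose * Matrix.diagonal (fun α => M (Function.update h j y α)) * C) i j)
      = fun _ : ℝ =>
      (C.transpose * Matrix.diagonal (fun α => M (h α)) * C) i j := by
    funext y
    simp only [Matrix.mul_apply, Matrix.transpose_apply, Matrix.diagonal_apply, mul_ite,
      mul_zero, Finset.sum_ite_eq', Finset.mem_univ, if_true]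
    apply Finset.sum_congr rfl
    intro α _
    by_cases hα : α = j
    · subst hα
      simp [hCdiag]
    · rw [Function.update_of_ne hα]
  rw [key, deriv_const]
end
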